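/- Let X be a real Banach space, f₀ ∈ S_{X*}, ε > 0, r > 0, and let C ⊆ X** be a subset of r·B_{X**} such that x**(f₀) > ε for every x** ∈ C. Then C is contained in the weak*-closure (in X** = (X*)*) of the set A = {x ∈ r·B_X : f₀(x) > ε}, where elements of X are identified with their canonical images in X**. -/

import Mathlib

/-!
Goldstine's theorem, localized to a weak*-open half-space. If `ψ` with `‖ψ‖ ≤ r` lay outside the
weak*-closure of the image of `r • B_X`, Hahn–Banach separation in the locally convex space
`(X**, w*)` would give a weak*-continuous functional, i.e. evaluation at some `f ∈ X*`, with
`ψ f > sup_{‖x‖ ≤ r} f x = r‖f‖ ≥ ψ f`. Since `{φ | ε < φ f₀}` is weak*-open, every point of `C`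
lies in the weak*-closure of the part of that image inside it.
-/

open NormedSpace Metric Set

/-- The weak*-closure of a set in the bidual `X** = (X*)*`: the preimage of the closure
of its image in `WeakDual ℝ (Dual ℝ X)`. -/
noncomputable def wStarClosureBidual (X : Type*) [NormedAddCommGroup X] [NormedSpace ℝ X]
    (S : Set (StrongDual ℝ (StrongDual ℝ X))) : Set (StrongDual ℝ (StrongDual ℝ X)) :=
  (⇑(StrongDual.toWeakDual (𝕜 := ℝ) (E := StrongDual ℝ X))) ⁻¹'
    closure ((⇑(StrongDual.toWeakDual (𝕜 := ℝ) (E := StrongDual ℝ X))) '' S)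

instance WeakDual.instLocallyConvexSpace {E : Type*} [AddCommGroup E] [Module ℝ E]
    [TopologicalSpace E] : LocallyConvexSpace ℝ (WeakDual ℝ E) :=
  WeakBilin.locallyConvexSpace

theorem StrongDual.mul_norm_le_of_forall_closedBall_lt {X : Type*} [NormedAddCommGroup X]
    [NormedSpace ℝ X] (f : StrongDual ℝ X) {r u : ℝ} (hr : 0 ≤ r)
    (hf : ∀ x ∈ closedBall (0 : X) r, f x < u) : r * ‖f‖ ≤ u := by
  have hu : 0 ≤ u := by simpa using (hf 0 (by simpa using hr)).le
  rw [← Real.norm_of_nonneg hr, ← norm_smul]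
  refine ContinuousLinearMap.opNorm_le_of_unit_norm hu fun x hx => ?_
  have hrx : ∀ y : X, ‖y‖ = 1 → f (r • y) < u := fun y hy =>
    hf _ (by simp [norm_smul, hy, abs_of_nonneg hr])
  rw [smul_apply, ← map_smul, Real.norm_eq_abs, abs_le]
  have hneg := hrx (-x) (by simpa using hx)
  rw [smul_neg, map_neg] at hneg
  exact ⟨by linarith, (hrx x hx).le⟩

theorem closedBall_subset_wStarClosureBidual_image_closedBall {X : Type*} [NormedAddCommGroup X]
    [NormedSpace ℝ X] (r : ℝ) :
    closedBall 0 r ⊆ wStarClosureBidual X (inclusionInDoubleDual ℝ X '' closedBall 0 r) := by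
  intro ψ hψ
  by_contra hψK
  have hconv : Convex ℝ (StrongDual.toWeakDual '' (inclusionInDoubleDual ℝ X '' closedBall 0 r)) :=
    ((convex_closedBall 0 r).linear_image (inclusionInDoubleDual ℝ X).toLinearMap).linear_image
      StrongDual.toWeakDual.toLinearMap
  obtain ⟨Φ, u, hK, hψu⟩ := geometric_hahn_banach_closed_point hconv.closure isClosed_closure hψK
  have hsurj := LinearMap.dualEmbedding_surjective (𝕜 := ℝ) (E := StrongDual ℝ (StrongDual ℝ X))
    (F := StrongDual ℝ X) (topDualPairing ℝ (StrongDual ℝ X))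
  obtain ⟨f, rfl⟩ := hsurj Φ
  have hfu : ∀ x ∈ closedBall (0 : X) r, f x < u := fun x hx =>
    hK _ (subset_closure ⟨_, ⟨x, hx, rfl⟩, rfl⟩)
  have hψr : ‖ψ‖ ≤ r :=
    mem_closedBall_zero_iff (E := StrongDual ℝ (StrongDual ℝ X)) |>.1 hψ
  have hψf : ψ f ≤ u := calc
    ψ f ≤ ‖ψ‖ * ‖f‖ := (le_abs_self _).trans (ψ.le_opNorm f)
    _ ≤ r * ‖f‖ := by gcongr
    _ ≤ u := f.mul_norm_le_of_forall_closedBall_lt ((norm_nonneg ψ).trans hψr) hfu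
  exact (hψf.trans_lt hψu).false

theorem subset_wStarClosure_of_canonical_image_general
    (X : Type*) [NormedAddCommGroup X] [NormedSpace ℝ X]
    (f₀ : StrongDual ℝ X) (ε r : ℝ)
    (C : Set (StrongDual ℝ (StrongDual ℝ X))) (hCr : C ⊆ closedBall 0 r)
    (hCε : ∀ ψ ∈ C, ε < ψ f₀) :
    C ⊆ wStarClosureBidual X
      (inclusionInDoubleDual ℝ X '' {x : X | ‖x‖ ≤ r ∧ ε < f₀ x}) := by
  intro ψ hψ
  set U : Set (WeakDual ℝ (StrongDual ℝ X)) := {φ | ε < φ f₀}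
  have hU : IsOpen U := isOpen_lt continuous_const (WeakDual.eval_continuous f₀)
  have hψ' : StrongDual.toWeakDual ψ ∈ U ∩ closure (StrongDual.toWeakDual ''
      (inclusionInDoubleDual ℝ X '' closedBall 0 r)) :=
    ⟨hCε ψ hψ, closedBall_subset_wStarClosureBidual_image_closedBall r (hCr hψ)⟩
  rw [wStarClosureBidual, mem_preimage]
  refine closure_mono ?_ (hU.inter_closure hψ')
  rintro _ ⟨hxε, _, ⟨x, hx, rfl⟩, rfl⟩
  exact ⟨_, ⟨x, ⟨mem_closedBall_zero_iff.1 hx, hxε⟩, rfl⟩, rfl⟩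

theorem subset_wStarClosure_of_canonical_image
    (X : Type*) [NormedAddCommGroup X] [NormedSpace ℝ X] [CompleteSpace X]
    (f₀ : StrongDual ℝ X) (hf₀ : ‖f₀‖ = 1) (ε r : ℝ) (hε : 0 < ε) (hr : 0 < r)
    (C : Set (StrongDual ℝ (StrongDual ℝ X))) (hCr : C ⊆ closedBall 0 r)
    (hCε : ∀ ψ ∈ C, ε < ψ f₀) :
    C ⊆ wStarClosureBidual X
      (inclusionInDoubleDual ℝ X '' {x : X | ‖x‖ ≤ r ∧ ε < f₀ x}) :=
  subset_wStarClosure_of_canonical_image_general X f₀ ε r C hCr hCε
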